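/- Let n ≥ 1, let W be an n×n weight matrix with all entries in {1, 2, 3, …} ∪ {∞} (strictly positive weights), let d denote the shortest-walk distance induced by W, and let Z ⊆ {1,…,n} be a nonempty set of terminals with d(v, s(v)) < ∞ for every vertex v, where s(v) is the chosen nearest terminal of v. Suppose par : {1,…,n} → {1,…,n} satisfies par(z) = z for every z ∈ Z and d(v, s(v)) = W(v, par(v)) + d(par(v), s(v)) for every v ∉ Z. Then for every vertex v there exists k ∈ ℕ such that the k-th iterate par^k(v) equals s(v); that is, repeatedly following parents from any vertex reaches its chosen terminal. -/

import Mathlib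

/-!
For a non-terminal `v`, the hop `v → par v` starts a shortest walk to `s v`; comparing distances
then shows that `s v` is also a nearest terminal of `par v`, and the tie-breaking by label forces
`s (par v) = s v`. Since weights are at least `1` and `d(v, s v)` is finite, `d(·, s ·)` strictly
decreases along the parent step, so well-foundedness of `ℕ∞` ends the chain at a vertex that is its
own chosen terminal, and terminals are exactly such vertices.
-/

/-- The weight of the walk `q 0, q 1, …, q m` (a walk with `m` edges):
`Σ_{i<m} W (q i) (q (i+1))`. The empty walk (`m = 0`) has weight `0`. -/
def walkWeight {n : ℕ} (W : Fin n → Fin n → ℕ∞) {m : ℕ}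
    (q : Fin (m + 1) → Fin n) : ℕ∞ :=
  ∑ i : Fin m, W (q i.castSucc) (q i.succ)

/-- The shortest-walk distance `d(u,v)`: the infimum over all walks of any length
from `u` to `v` of the walk weight. -/
noncomputable def walkDist {n : ℕ} (W : Fin n → Fin n → ℕ∞) (u v : Fin n) : ℕ∞ :=
  ⨅ m : ℕ,
    (Finset.univ.filter fun q : Fin (m + 1) → Fin n =>
        q 0 = u ∧ q (Fin.last m) = v).inf
      fun q => walkWeight W q

/-- `s` assigns to each vertex its chosen nearest terminal: `s x` is the terminal
`z ∈ Z` minimizing the pair `(d(x,z), z)` lexicographically (nearest terminal,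
ties broken by smallest label). -/
def ChosenNearestTerminal {n : ℕ} (W : Fin n → Fin n → ℕ∞) (Z : Finset (Fin n))
    (s : Fin n → Fin n) : Prop :=
  ∀ x, s x ∈ Z ∧ ∀ z ∈ Z,
    walkDist W x (s x) < walkDist W x z ∨
      (walkDist W x (s x) = walkDist W x z ∧ ((s x : ℕ) ≤ (z : ℕ)))

lemma walkWeight_cons {n : ℕ} (W : Fin n → Fin n → ℕ∞) {m : ℕ} (v : Fin n)
    (q : Fin (m + 1) → Fin n) :
    walkWeight W (Fin.cons v q : Fin (m + 2) → Fin n) = W v (q 0) + walkWeight W q := by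
  simp only [walkWeight, Fin.sum_univ_succ, Fin.castSucc_zero, Fin.cons_zero, Fin.cons_succ,
    ← Fin.succ_castSucc]

lemma walkDist_le_walkWeight {n : ℕ} (W : Fin n → Fin n → ℕ∞) {m : ℕ}
    (q : Fin (m + 1) → Fin n) : walkDist W (q 0) (q (Fin.last m)) ≤ walkWeight W q :=
  (iInf_le _ m).trans (Finset.inf_le (by simp))

/-- In the well-order `ℕ∞` a finite distance is the weight of some walk. -/
lemma exists_walkWeight_eq_walkDist {n : ℕ} (W : Fin n → Fin n → ℕ∞) {u v : Fin n}
    (h : walkDist W u v ≠ ⊤) :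
    ∃ (m : ℕ) (q : Fin (m + 1) → Fin n),
      q 0 = u ∧ q (Fin.last m) = v ∧ walkWeight W q = walkDist W u v := by
  obtain ⟨m, hm⟩ := ciInf_mem fun m : ℕ =>
    (Finset.univ.filter fun q : Fin (m + 1) → Fin n =>
        q 0 = u ∧ q (Fin.last m) = v).inf fun q => walkWeight W q
  dsimp only at hm
  rw [← walkDist] at hm
  have hne : (Finset.univ.filter fun q : Fin (m + 1) → Fin n =>
      q 0 = u ∧ q (Fin.last m) = v).Nonempty := by
    by_contra hempty
    rw [Finset.not_nonempty_iff_eq_empty.mp hempty, Finset.inf_empty] at hm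
    exact h hm.symm
  obtain ⟨q, hq, hwq⟩ := Finset.exists_mem_eq_inf _ hne fun q => walkWeight W q
  obtain ⟨hq0, hql⟩ := (Finset.mem_filter.mp hq).2
  exact ⟨m, q, hq0, hql, hwq.symm.trans hm⟩

lemma walkDist_self {n : ℕ} (W : Fin n → Fin n → ℕ∞) (v : Fin n) : walkDist W v v = 0 :=
  nonpos_iff_eq_zero.mp <| by
    simpa [walkWeight] using walkDist_le_walkWeight W (fun _ : Fin 1 => v)

lemma one_le_walkDist {n : ℕ} {W : Fin n → Fin n → ℕ∞} (hpos : ∀ i j, 1 ≤ W i j)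
    {u v : Fin n} (h : u ≠ v) : 1 ≤ walkDist W u v := by
  refine le_iInf fun m => Finset.le_inf fun q hq => ?_
  obtain ⟨hq0, hql⟩ := (Finset.mem_filter.mp hq).2
  cases m with
  | zero => exact absurd (hq0.symm.trans hql) h
  | succ m =>
    rw [← Fin.cons_self_tail q, walkWeight_cons]
    exact le_add_right (hpos _ _)

lemma walkDist_le_add_walkDist {n : ℕ} (W : Fin n → Fin n → ℕ∞) (v u z : Fin n) :
    walkDist W v z ≤ W v u + walkDist W u z := by
  rcases eq_or_ne (walkDist W u z) ⊤ with h | h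
  · simp [h]
  obtain ⟨m, q, hq0, hql, hwq⟩ := exists_walkWeight_eq_walkDist W h
  have hwalk := walkDist_le_walkWeight W (Fin.cons v q : Fin (m + 2) → Fin n)
  rwa [walkWeight_cons, hq0, hwq, Fin.cons_zero, ← Fin.succ_last, Fin.cons_succ, hql] at hwalk

namespace ChosenNearestTerminal

variable {n : ℕ} {W : Fin n → Fin n → ℕ∞} {Z : Finset (Fin n)} {s : Fin n → Fin n}

lemma walkDist_le (hs : ChosenNearestTerminal W Z s) (x : Fin n) {z : Fin n} (hz : z ∈ Z) :
    walkDist W x (s x) ≤ walkDist W x z := by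
  rcases (hs x).2 z hz with h | ⟨h, -⟩
  exacts [h.le, h.le]

lemma val_le_of_walkDist_le (hs : ChosenNearestTerminal W Z s) {x z : Fin n} (hz : z ∈ Z)
    (h : walkDist W x z ≤ walkDist W x (s x)) : (s x : ℕ) ≤ z := by
  rcases (hs x).2 z hz with hlt | ⟨-, hle⟩
  exacts [absurd h hlt.not_ge, hle]

lemma apply_eq_self (hpos : ∀ i j, 1 ≤ W i j) (hs : ChosenNearestTerminal W Z s) {z : Fin n}
    (hz : z ∈ Z) : s z = z := by
  by_contra hne
  have hzero : walkDist W z (s z) = 0 :=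
    nonpos_iff_eq_zero.mp ((hs.walkDist_le z hz).trans (walkDist_self W z).le)
  simpa [hzero] using one_le_walkDist hpos (Ne.symm hne)

/-- If a finite first hop `v → u` lies on a shortest walk from `v` to `s v`, then every inequality
in `d(v, s v) ≤ d(v, s u) ≤ W v u + d(u, s u) ≤ W v u + d(u, s v) = d(v, s v)` is an equality,
so `s u` and `s v` tie for both `u` and `v`, and the tie-breaking by label forces `s u = s v`. -/
lemma apply_eq_of_walkDist_eq_add (hs : ChosenNearestTerminal W Z s) {v u : Fin n}
    (hW : W v u ≠ ⊤) (hd : walkDist W v (s v) = W v u + walkDist W u (s v)) : s u = s v := by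
  have hvu : walkDist W v (s v) ≤ W v u + walkDist W u (s u) :=
    (hs.walkDist_le v (hs u).1).trans (walkDist_le_add_walkDist W v u (s u))
  have hu : walkDist W u (s v) ≤ walkDist W u (s u) := by
    rwa [hd, ENat.add_le_add_iff_left hW] at hvu
  have hv : walkDist W v (s u) ≤ walkDist W v (s v) := by
    rw [hd]
    exact (walkDist_le_add_walkDist W v u (s u)).trans
      (add_le_add_right (hs.walkDist_le u (hs v).1) _)
  exact Fin.ext (le_antisymm (hs.val_le_of_walkDist_le (hs v).1 hu)
    (hs.val_le_of_walkDist_le (hs u).1 hv))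

end ChosenNearestTerminal

lemma exists_iterate_eq_of_lt {α β : Type*} [Preorder β] [WellFoundedLT β] (f t : α → α)
    (μ : α → β) (h : ∀ v, v ≠ t v → t (f v) = t v ∧ μ (f v) < μ v) (v : α) :
    ∃ k, f^[k] v = t v := by
  induction v using (InvImage.wf μ wellFounded_lt).induction with
  | _ v ih =>
    by_cases hv : v = t v
    · exact ⟨0, hv⟩
    obtain ⟨hft, hlt⟩ := h v hv
    obtain ⟨k, hk⟩ := ih (f v) hlt
    exact ⟨k + 1, by rw [Function.iterate_succ_apply, hk, hft]⟩

theorem parent_iterate_reaches_terminal_general (n : ℕ)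
    (W : Fin n → Fin n → ℕ∞) (hpos : ∀ i j, 1 ≤ W i j)
    (Z : Finset (Fin n))
    (s : Fin n → Fin n) (hs : ChosenNearestTerminal W Z s)
    (hfin : ∀ v, walkDist W v (s v) < ⊤)
    (par : Fin n → Fin n)
    (hpar : ∀ v ∉ Z, walkDist W v (s v) = W v (par v) + walkDist W (par v) (s v)) :
    ∀ v : Fin n, ∃ k : ℕ, par^[k] v = s v := by
  refine exists_iterate_eq_of_lt par s (fun v => walkDist W v (s v)) fun v hne => ?_
  have hvZ : v ∉ Z := fun hv => hne (hs.apply_eq_self hpos hv).symm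
  have hd := hpar v hvZ
  obtain ⟨hW, hdu⟩ : W v (par v) ≠ ⊤ ∧ walkDist W (par v) (s v) ≠ ⊤ :=
    WithTop.add_ne_top.mp (hd ▸ (hfin v).ne)
  have hsu := hs.apply_eq_of_walkDist_eq_add hW hd
  refine ⟨hsu, ?_⟩
  rw [hsu, hd]
  exact ENat.lt_add_left hdu (zero_lt_one.trans_le (hpos v (par v)))

/-- With strictly positive weights (entries in `{1, 2, …} ∪ {∞}`),
a nonempty terminal set `Z` with every vertex at finite distance from its chosen
terminal, and a parent map `par` fixing terminals and taking a first hop on a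
shortest walk to the chosen terminal at every non-terminal, repeatedly following
parents from any vertex reaches its chosen terminal: `∃ k, par^[k] v = s v`. -/
theorem parent_iterate_reaches_terminal (n : ℕ) (hn : 1 ≤ n)
    (W : Fin n → Fin n → ℕ∞) (hpos : ∀ i j, 1 ≤ W i j)
    (Z : Finset (Fin n)) (hZ : Z.Nonempty)
    (s : Fin n → Fin n) (hs : ChosenNearestTerminal W Z s)
    (hfin : ∀ v, walkDist W v (s v) < ⊤)
    (par : Fin n → Fin n)
    (hparZ : ∀ z ∈ Z, par z = z)
    (hpar : ∀ v ∉ Z, walkDist W v (s v) = W v (par v) + walkDist W (par v) (s v)) :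
    ∀ v : Fin n, ∃ k : ℕ, par^[k] v = s v :=
  parent_iterate_reaches_terminal_general n W hpos Z s hs hfin par hpar
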